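/- Let c_{0:n} ∈ ℂ^{n+1} with c_0 real be such that its Toeplitz matrix T_n is positive semidefinite and singular, and let ĉ_{0:n}(k) ∈ ℂ^{n+1}, k = 1,2,…, be vectors whose Toeplitz matrices are positive semidefinite and such that ĉ_{0:n}(k) → c_{0:n} as k → ∞. If δ is a weakly continuous metric on M, then ρ_δ(F_{ĉ_{0:n}(k)}) → 0 as k → ∞. -/

import Mathlib

/-!
A singular positive semidefinite `T_n` has a kernel vector, the coefficient vector of a nonzero
polynomial `p` of degree `≤ n`. Since `∫ |q(e^{iθ})|² dμ = 2π q* T_n(c(μ)) q` for every polynomial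
`q` of degree `≤ n`, measures whose covariances tend to `c` have `∫ |p(e^{iθ})|² dμ → 0`: their
mass concentrates on the finite zero set `Z` of `p` on the circle. The Lagrange basis `ℓ_z` of `Z`
also has degree `≤ n`, so the integrals of `|ℓ_z|²` converge as well. Splitting a continuous `f`
as `∑ f(z) |ℓ_z|²` plus a function vanishing on `Z` shows that all such measures converge weakly to
one discrete measure `∑ w_z δ_z`, so the uncertainty sets shrink to a point and a weakly
continuous metric sends their diameters to `0`.
-/

open MeasureTheory Complex Filter Topology
open scoped ENNReal ComplexOrder

noncomputable section

instance : Fact (0 < 2 * Real.pi) := ⟨by positivity⟩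

/-- The unit circle `𝕋`, identified with `(−π,π]`, formalized as `ℝ / 2πℤ`. -/
abbrev UnitCirc : Type := AddCircle (2 * Real.pi)

/-- `M`: the space of finite nonnegative Borel measures on `𝕋`, equipped with
the topology of weak convergence. -/
abbrev MSp : Type := MeasureTheory.FiniteMeasure UnitCirc

/-- The `k`-th Fourier coefficient (covariance) `c_k(μ) = (1/2π) ∫ e^{−ikθ} dμ(θ)`. -/
def covCoeff (μ : MSp) (k : ℕ) : ℂ :=
  ((2 * Real.pi : ℝ) : ℂ)⁻¹ * ∫ θ, fourier (-(k : ℤ)) θ ∂(μ : Measure UnitCirc)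

/-- The uncertainty set `F_{c_{0:n}}` for `c_{0:n} ∈ ℂ^{n+1}`. -/
def FsetFin (n : ℕ) (c : Fin (n + 1) → ℂ) : Set MSp :=
  {μ | ∀ k : Fin (n + 1), covCoeff μ (k : ℕ) = c k}

/-- The Hermitian Toeplitz matrix `T_n = [c_{j−k}]_{j,k=0}^n`, with `c_{−k} = conj (c_k)`. -/
def toeplitz (n : ℕ) (c : Fin (n + 1) → ℂ) : Matrix (Fin (n + 1)) (Fin (n + 1)) ℂ :=
  fun j k =>
    if _ : (k : ℕ) ≤ (j : ℕ) then
      c ⟨(j : ℕ) - (k : ℕ), Nat.lt_of_le_of_lt (Nat.sub_le _ _) j.isLt⟩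
    else
      starRingEnd ℂ (c ⟨(k : ℕ) - (j : ℕ), Nat.lt_of_le_of_lt (Nat.sub_le _ _) k.isLt⟩)

/-- The diameter `ρ_δ(F)` of a set of measures, valued in `[0,∞]`. -/
def diamE (δ : MSp → MSp → ℝ) (F : Set MSp) : ℝ≥0∞ :=
  ⨆ μ0 ∈ F, ⨆ μ1 ∈ F, ENNReal.ofReal (δ μ0 μ1)

open scoped NNReal

section CompactSpace

variable {X : Type*} [TopologicalSpace X] [CompactSpace X]

theorem exists_abs_le_add_mul_of_forall_eq_zero {g h : X → ℝ} (hg : Continuous g)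
    (hh : Continuous h) (hh0 : ∀ x, 0 ≤ h x) (hgh : ∀ x, h x = 0 → g x = 0) {ε : ℝ}
    (hε : 0 < ε) : ∃ C, ∀ x, |g x| ≤ ε + C * h x := by
  have hK : IsCompact {x | ε ≤ |g x|} := (isClosed_le continuous_const hg.abs).isCompact
  obtain ⟨η, hη, hηh⟩ := hK.exists_forall_le' hh.continuousOn fun x hx =>
    (hh0 x).lt_of_ne' fun hx0 => by simp [hgh x hx0] at hx; linarith
  obtain ⟨M, hM⟩ := isCompact_univ.exists_bound_of_continuousOn hg.continuousOn
  refine ⟨M / η, fun x => ?_⟩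
  have hM0 : 0 ≤ M := (norm_nonneg _).trans (hM x trivial)
  by_cases hx : ε ≤ |g x|
  · calc |g x| ≤ M / η * η := by rw [div_mul_cancel₀ _ hη.ne']; exact hM x trivial
      _ ≤ M / η * h x := by gcongr; exact hηh x hx
      _ ≤ ε + M / η * h x := le_add_of_nonneg_left hε.le
  · have := mul_nonneg (div_nonneg hM0 hη.le) (hh0 x)
    linarith [not_le.mp hx]

variable [MeasurableSpace X] [OpensMeasurableSpace X]

theorem Continuous.integrable_of_compactSpace {E : Type*} [NormedAddCommGroup E] {f : X → E}
    (hf : Continuous f) (μ : Measure X) [IsFiniteMeasure μ] : Integrable f μ :=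
  hf.integrable_of_hasCompactSupport (.of_compactSpace f)

theorem tendsto_integral_zero_of_forall_eq_zero {ι : Type*} {l : Filter ι}
    {μ : ι → FiniteMeasure X} {M : ℝ} (hM : ∀ᶠ i in l, ((μ i).mass : ℝ) ≤ M)
    {g h : X → ℝ} (hg : Continuous g) (hh : Continuous h) (hh0 : ∀ x, 0 ≤ h x)
    (hgh : ∀ x, h x = 0 → g x = 0)
    (hlim : Tendsto (fun i => ∫ x, h x ∂(μ i : Measure X)) l (𝓝 0)) :
    Tendsto (fun i => ∫ x, g x ∂(μ i : Measure X)) l (𝓝 0) := by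
  rw [Metric.tendsto_nhds]
  intro ε hε
  set B := max M 1
  have hB : 0 < B := lt_max_of_lt_right one_pos
  obtain ⟨C, hC⟩ :=
    exists_abs_le_add_mul_of_forall_eq_zero hg hh hh0 hgh (by positivity : 0 < ε / (2 * B))
  have hCh : ∀ᶠ i in l, C * ∫ x, h x ∂(μ i : Measure X) < ε / 2 := by
    have := hlim.const_mul C
    rw [mul_zero] at this
    exact this.eventually_lt_const (half_pos hε)
  filter_upwards [hM, hCh] with i hMi hCi
  have hmass : (μ i : Measure X).real Set.univ = (μ i).mass := by
    simp [measureReal_def, ← FiniteMeasure.ennreal_mass]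
  rw [Real.dist_eq, sub_zero]
  calc |∫ x, g x ∂(μ i : Measure X)| ≤ ∫ x, |g x| ∂(μ i : Measure X) :=
        abs_integral_le_integral_abs
    _ ≤ ∫ x, (ε / (2 * B) + C * h x) ∂(μ i : Measure X) :=
        integral_mono (hg.abs.integrable_of_compactSpace _)
          ((continuous_const.add (continuous_const.mul hh)).integrable_of_compactSpace _) hC
    _ = ε / (2 * B) * (μ i).mass + C * ∫ x, h x ∂(μ i : Measure X) := by
        rw [integral_add (integrable_const _) ((hh.integrable_of_compactSpace _).const_mul C),
          integral_const, integral_const_mul, hmass, smul_eq_mul, mul_comm]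
    _ < ε / (2 * B) * B + ε / 2 :=
        add_lt_add_of_le_of_lt (by gcongr; exact hMi.trans (le_max_left _ _)) hCi
    _ = ε := by field_simp; ring

def sumDirac (Z : Finset X) (w : X → ℝ≥0) : FiniteMeasure X :=
  ⟨∑ z ∈ Z, w z • Measure.dirac z, inferInstance⟩

theorem integral_sumDirac (Z : Finset X) (w : X → ℝ≥0) {f : X → ℝ} (hf : Continuous f) :
    ∫ x, f x ∂(sumDirac Z w : Measure X) = ∑ z ∈ Z, w z * f z := by
  simp [sumDirac, integral_finsetSum_measure, hf.integrable_of_compactSpace,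
    integral_dirac' _ _ hf.stronglyMeasurable, NNReal.smul_def]

theorem tendsto_sumDirac_of_tendsto_integral {ι : Type*} {l : Filter ι}
    {μ : ι → FiniteMeasure X} {M : ℝ} (hM : ∀ᶠ i in l, ((μ i).mass : ℝ) ≤ M)
    {h : X → ℝ} (hh : Continuous h) (hh0 : ∀ x, 0 ≤ h x)
    (hlim : Tendsto (fun i => ∫ x, h x ∂(μ i : Measure X)) l (𝓝 0))
    {Z : Finset X} (hZ : ∀ x, h x = 0 → x ∈ Z) {φ : X → X → ℝ} (hφ : ∀ z, Continuous (φ z))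
    (hφ_self : ∀ z ∈ Z, φ z z = 1) (hφ_ne : ∀ z ∈ Z, ∀ z' ∈ Z, z ≠ z' → φ z z' = 0)
    {w : X → ℝ≥0}
    (hw : ∀ z ∈ Z, Tendsto (fun i => ∫ x, φ z x ∂(μ i : Measure X)) l (𝓝 (w z))) :
    Tendsto μ l (𝓝 (sumDirac Z w)) := by
  refine FiniteMeasure.tendsto_of_forall_integral_tendsto fun f => ?_
  set g : X → ℝ := fun x => f x - ∑ z ∈ Z, f z * φ z x
  have hg : Continuous g :=
    f.continuous.sub (continuous_finsetSum _ fun z _ => continuous_const.mul (hφ z))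
  have hgh : ∀ x, h x = 0 → g x = 0 := fun x hx => by
    rw [sub_eq_zero, Finset.sum_eq_single_of_mem x (hZ x hx)
      fun z hz hzx => by rw [hφ_ne z hz x (hZ x hx) hzx, mul_zero], hφ_self x (hZ x hx), mul_one]
  have hsplit : ∀ i, ∫ x, f x ∂(μ i : Measure X)
      = ∫ x, g x ∂(μ i : Measure X) + ∑ z ∈ Z, f z * ∫ x, φ z x ∂(μ i : Measure X) := by
    intro i
    have hint : ∀ z ∈ Z, Integrable (fun x => f z * φ z x) (μ i : Measure X) :=
      fun z _ => ((hφ z).integrable_of_compactSpace _).const_mul _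
    simp_rw [← integral_const_mul]
    rw [← integral_finsetSum _ hint, ← integral_add (hg.integrable_of_compactSpace _)
      (integrable_finsetSum _ hint)]
    simp [g]
  rw [integral_sumDirac Z w f.continuous]
  simp_rw [hsplit]
  simpa [mul_comm] using (tendsto_integral_zero_of_forall_eq_zero hM hg hh hh0 hgh hlim).add
    (tendsto_finsetSum Z fun z hz => (hw z hz).const_mul (f z))

end CompactSpace

open Polynomial AddCircle Matrix

theorem integral_fourier_neg_natCast (μ : MSp) (m : ℕ) :
    ∫ θ, fourier (-(m : ℤ)) θ ∂(μ : Measure UnitCirc) = (2 * Real.pi : ℝ) * covCoeff μ m := by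
  have : ((2 * Real.pi : ℝ) : ℂ) ≠ 0 := by exact_mod_cast Real.two_pi_pos.ne'
  rw [covCoeff, mul_inv_cancel_left₀ this]

theorem integral_fourier_natCast (μ : MSp) (m : ℕ) :
    ∫ θ, fourier (m : ℤ) θ ∂(μ : Measure UnitCirc)
      = (2 * Real.pi : ℝ) * starRingEnd ℂ (covCoeff μ m) := by
  have hconj : ∀ θ : UnitCirc, fourier (m : ℤ) θ = starRingEnd ℂ (fourier (-(m : ℤ)) θ) :=
    fun θ => by rw [fourier_neg, Complex.conj_conj]
  simp_rw [hconj, integral_conj, integral_fourier_neg_natCast, map_mul, Complex.conj_ofReal]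

theorem integral_fourier_sub (μ : MSp) {n : ℕ} (j k : Fin (n + 1)) :
    ∫ θ, fourier ((k : ℤ) - j) θ ∂(μ : Measure UnitCirc)
      = (2 * Real.pi : ℝ) * toeplitz n (fun i => covCoeff μ i) j k := by
  rw [toeplitz]
  split_ifs with hkj
  · rw [show (k : ℤ) - j = -((j - k : ℕ) : ℤ) by omega, integral_fourier_neg_natCast]
  · rw [show (k : ℤ) - j = ((k - j : ℕ) : ℤ) by omega, integral_fourier_natCast]

theorem eval_toCircle_eq_sum_fourier {n : ℕ} {p : ℂ[X]} (hp : p.natDegree ≤ n) (θ : UnitCirc) :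
    p.eval (toCircle θ : ℂ) = ∑ j : Fin (n + 1), p.coeff j * fourier (j : ℤ) θ := by
  rw [eval_eq_sum_range' (Nat.lt_succ_of_le hp), ← Fin.sum_univ_eq_sum_range]
  simp_rw [fourier_apply, natCast_zsmul, toCircle_nsmul, Circle.coe_pow]

def toeplitzForm (n : ℕ) (c : Fin (n + 1) → ℂ) (p : ℂ[X]) : ℂ :=
  star (fun j : Fin (n + 1) => p.coeff j) ⬝ᵥ (toeplitz n c *ᵥ fun j => p.coeff j)

theorem integral_normSq_eval_toCircle (μ : MSp) {n : ℕ} {p : ℂ[X]} (hp : p.natDegree ≤ n) :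
    ((∫ θ, normSq (p.eval (toCircle θ : ℂ)) ∂(μ : Measure UnitCirc) : ℝ) : ℂ)
      = (2 * Real.pi : ℝ) * toeplitzForm n (fun i => covCoeff μ i) p := by
  have hint : ∀ m : ℤ, Integrable (fun θ => fourier m θ) (μ : Measure UnitCirc) := fun m =>
    (fourier m).continuous.integrable_of_compactSpace _
  have hexpand : ∀ θ : UnitCirc, (normSq (p.eval (toCircle θ : ℂ)) : ℂ) = ∑ j : Fin (n + 1),
      ∑ k : Fin (n + 1), starRingEnd ℂ (p.coeff j) * p.coeff k * fourier ((k : ℤ) - j) θ := by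
    intro θ
    rw [← Complex.mul_conj, mul_comm, eval_toCircle_eq_sum_fourier hp, map_sum,
      Finset.sum_mul_sum]
    refine Finset.sum_congr rfl fun j _ => Finset.sum_congr rfl fun k _ => ?_
    rw [map_mul, ← fourier_neg, sub_eq_add_neg, fourier_add]
    ring
  rw [← integral_complex_ofReal]
  simp_rw [hexpand]
  rw [integral_finsetSum _ fun j _ => integrable_finsetSum _ fun k _ => (hint _).const_mul _]
  simp_rw [integral_finsetSum _ fun k _ => (hint _).const_mul _, integral_const_mul,
    integral_fourier_sub, toeplitzForm, dotProduct, Matrix.mulVec, dotProduct, Finset.mul_sum]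
  refine Finset.sum_congr rfl fun j _ => Finset.sum_congr rfl fun k _ => ?_
  simp only [Pi.star_apply, RCLike.star_def]
  ring

theorem continuous_toeplitz (n : ℕ) : Continuous (toeplitz n) :=
  continuous_pi fun j => continuous_pi fun k => by
    unfold toeplitz
    split_ifs <;> fun_prop

theorem continuous_toeplitzForm (n : ℕ) (p : ℂ[X]) :
    Continuous fun c => toeplitzForm n c p :=
  continuous_const.dotProduct ((continuous_toeplitz n).matrix_mulVec continuous_const)

theorem re_toeplitzForm_nonneg {n : ℕ} {c : Fin (n + 1) → ℂ} (hc : (toeplitz n c).PosSemidef)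
    (p : ℂ[X]) : 0 ≤ (toeplitzForm n c p).re :=
  (Complex.nonneg_iff.1 (hc.dotProduct_mulVec_nonneg _)).1

theorem tendsto_integral_normSq_eval_toCircle {ι : Type*} {l : Filter ι} {μ : ι → MSp} {n : ℕ}
    {c : Fin (n + 1) → ℂ} (hcov : Tendsto (fun i (j : Fin (n + 1)) => covCoeff (μ i) j) l (𝓝 c))
    {p : ℂ[X]} (hp : p.natDegree ≤ n) :
    Tendsto (fun i => ∫ θ, normSq (p.eval (toCircle θ : ℂ)) ∂(μ i : Measure UnitCirc)) l
      (𝓝 ((2 * Real.pi : ℝ) * toeplitzForm n c p).re) := by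
  have hcont : Continuous fun c' => ((2 * Real.pi : ℝ) * toeplitzForm n c' p).re :=
    Complex.continuous_re.comp (continuous_const.mul (continuous_toeplitzForm n p))
  refine ((hcont.tendsto c).comp hcov).congr fun i => ?_
  rw [Function.comp_apply, ← integral_normSq_eval_toCircle (μ i) hp, Complex.ofReal_re]

theorem injective_coe_toCircle {T : ℝ} (hT : T ≠ 0) :
    Function.Injective fun θ : AddCircle T => (toCircle θ : ℂ) :=
  Subtype.coe_injective.comp (injective_toCircle hT)

def circleRoots (p : ℂ[X]) : Finset UnitCirc :=
  p.roots.toFinset.preimage _ (injective_coe_toCircle Real.two_pi_pos.ne').injOn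

theorem mem_circleRoots {p : ℂ[X]} (hp : p ≠ 0) {θ : UnitCirc} :
    θ ∈ circleRoots p ↔ p.eval (toCircle θ : ℂ) = 0 := by
  simp [circleRoots, hp]

theorem card_circleRoots_le (p : ℂ[X]) : (circleRoots p).card ≤ p.natDegree :=
  calc (circleRoots p).card ≤ p.roots.toFinset.card :=
        Finset.card_le_card_of_injOn _ (fun _ hθ => Finset.mem_preimage.1 hθ)
          (injective_coe_toCircle Real.two_pi_pos.ne').injOn
    _ ≤ Multiset.card p.roots := Multiset.toFinset_card_le _
    _ ≤ p.natDegree := card_roots' p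

theorem exists_toeplitzForm_eq_zero {n : ℕ} {c : Fin (n + 1) → ℂ} (hc : (toeplitz n c).det = 0) :
    ∃ p : ℂ[X], p ≠ 0 ∧ p.natDegree ≤ n ∧ toeplitzForm n c p = 0 := by
  obtain ⟨a, ha, hTa⟩ := Matrix.exists_mulVec_eq_zero_iff.2 hc
  set p := (degreeLTEquiv ℂ (n + 1)).symm a
  have hpa : (fun j : Fin (n + 1) => (p : ℂ[X]).coeff j) = a :=
    (degreeLTEquiv ℂ (n + 1)).apply_symm_apply a
  have hp0 : (p : ℂ[X]) ≠ 0 := fun h => ha (by rw [← hpa, h]; rfl)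
  refine ⟨p, hp0, ?_, by rw [toeplitzForm, hpa, hTa, dotProduct_zero]⟩
  have := (natDegree_lt_iff_degree_lt hp0).2 (mem_degreeLT.1 p.2)
  omega

theorem exists_tendsto_of_tendsto_covCoeff {n : ℕ} {c : Fin (n + 1) → ℂ}
    (hpsd : (toeplitz n c).PosSemidef) (hsing : (toeplitz n c).det = 0) :
    ∃ ν : MSp, ∀ {ι : Type} {l : Filter ι} {μ : ι → MSp},
      Tendsto (fun i (j : Fin (n + 1)) => covCoeff (μ i) j) l (𝓝 c) → Tendsto μ l (𝓝 ν) := by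
  classical
  obtain ⟨p, hp0, hpn, hpc⟩ := exists_toeplitzForm_eq_zero hsing
  set ℓ : UnitCirc → ℂ[X] := fun z => Lagrange.basis (circleRoots p) (fun θ => (toCircle θ : ℂ)) z
  have hinj : Set.InjOn (fun θ : UnitCirc => (toCircle θ : ℂ)) (circleRoots p) :=
    (injective_coe_toCircle Real.two_pi_pos.ne').injOn
  have hℓn : ∀ z ∈ circleRoots p, (ℓ z).natDegree ≤ n := fun z hz => by
    rw [Lagrange.natDegree_basis hinj hz]
    have := card_circleRoots_le p
    omega
  refine ⟨sumDirac (circleRoots p)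
    fun z => ((2 * Real.pi : ℝ) * toeplitzForm n c (ℓ z)).re.toNNReal, fun {ι} {l} {μ} hcov => ?_⟩
  have hmass : ∀ i, ∫ θ, normSq ((1 : ℂ[X]).eval (toCircle θ : ℂ)) ∂(μ i : Measure UnitCirc)
      = (μ i).mass := fun i => by simp
  obtain ⟨M, hM⟩ : ∃ M, ∀ᶠ i in l, ((μ i).mass : ℝ) ≤ M :=
    ⟨_, ((tendsto_integral_normSq_eval_toCircle hcov (p := 1) (by simp)).congr hmass)
      |>.eventually_le_const (lt_add_one _)⟩
  refine tendsto_sumDirac_of_tendsto_integral hM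
    (h := fun θ => normSq (p.eval (toCircle θ : ℂ))) (by fun_prop) (fun _ => normSq_nonneg _)
    (by simpa [hpc] using tendsto_integral_normSq_eval_toCircle hcov hpn)
    (fun θ hθ => (mem_circleRoots hp0).2 (normSq_eq_zero.1 hθ))
    (φ := fun z θ => normSq ((ℓ z).eval (toCircle θ : ℂ))) (fun z => by fun_prop)
    (fun z hz => by simpa using congrArg normSq (Lagrange.eval_basis_self hinj hz))
    (fun z _ z' hz' hzz' => normSq_eq_zero.2
      (Lagrange.eval_basis_of_ne (v := fun θ => (toCircle θ : ℂ)) hzz' hz')) fun z hz => ?_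
  rw [Real.coe_toNNReal _
    (by simpa using mul_nonneg Real.two_pi_pos.le (re_toeplitzForm_nonneg hpsd (ℓ z)))]
  exact tendsto_integral_normSq_eval_toCircle hcov (hℓn z hz)

theorem tendsto_smallSets_of_tendsto_comap {ι β : Type*} {l : Filter ι} {lb : Filter β}
    {F : ι → Set β}
    (h : Tendsto (fun p : {p : ι × β // p.2 ∈ F p.1} => p.1.2) (l.comap fun p => p.1.1) lb) :
    Tendsto F l lb.smallSets := by
  refine tendsto_smallSets_iff.2 fun t ht => ?_
  obtain ⟨s, hs, hst⟩ := mem_comap.1 (h ht)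
  filter_upwards [hs] with i hi x hx
  exact @hst ⟨(i, x), hx⟩ hi

theorem tendsto_diamE_zero {ι : Type*} {l : Filter ι} {F : ι → Set MSp} {ν : MSp}
    (hF : Tendsto F l (𝓝 ν).smallSets) {δ : MSp → MSp → ℝ}
    (hδ : ContinuousAt (fun p : MSp × MSp => δ p.1 p.2) (ν, ν)) (hδν : δ ν ν = 0) :
    Tendsto (fun i => diamE δ (F i)) l (𝓝 0) := by
  refine ENNReal.tendsto_nhds_zero.2 fun ε hε => ?_
  obtain ⟨r, -, hr, hrε⟩ := ENNReal.lt_iff_exists_real_btwn.1 hε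
  have hδr : {p : MSp × MSp | δ p.1 p.2 < r} ∈ 𝓝 (ν, ν) :=
    hδ (Iio_mem_nhds (by simpa [hδν] using hr))
  obtain ⟨U, hU, V, hV, hUV⟩ := mem_nhds_prod_iff.1 hδr
  filter_upwards [tendsto_smallSets_iff.1 hF (U ∩ V) (inter_mem hU hV)] with i hi
  refine le_trans (iSup₂_le fun μ₀ h₀ => iSup₂_le fun μ₁ h₁ => ?_) hrε.le
  exact ENNReal.ofReal_le_ofReal (hUV (show (μ₀, μ₁) ∈ U ×ˢ V from ⟨(hi h₀).1, (hi h₁).2⟩)).le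

theorem stmt2_general (n : ℕ) (c : Fin (n + 1) → ℂ)
    (hpsd : (toeplitz n c).PosSemidef) (hsing : (toeplitz n c).det = 0)
    (chat : ℕ → Fin (n + 1) → ℂ)
    (hconv : Tendsto chat atTop (nhds c))
    (δ : MSp → MSp → ℝ)
    (hm₀ : ∀ μ0 μ1 : MSp, δ μ0 μ1 = 0 ↔ μ0 = μ1)
    (hcont : Continuous (fun p : MSp × MSp => δ p.1 p.2)) :
    Tendsto (fun k => diamE δ (FsetFin n (chat k))) atTop (nhds 0) := by
  obtain ⟨ν, hν⟩ := exists_tendsto_of_tendsto_covCoeff hpsd hsing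
  refine tendsto_diamE_zero (tendsto_smallSets_of_tendsto_comap (hν ?_)) hcont.continuousAt
    ((hm₀ ν ν).2 rfl)
  exact ((hconv.comp tendsto_comap).congr fun p => funext fun j => (p.2 j).symm)

/-- If `c_{0:n}` has a singular positive semidefinite Toeplitz matrix and
`ĉ_{0:n}(k) → c_{0:n}` with all Toeplitz matrices positive semidefinite, then for any weakly
continuous metric `δ`, `ρ_δ(F_{ĉ_{0:n}(k)}) → 0` as `k → ∞`. -/
theorem stmt2 (n : ℕ) (c : Fin (n + 1) → ℂ) (hreal : (c 0).im = 0)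
    (hpsd : (toeplitz n c).PosSemidef) (hsing : (toeplitz n c).det = 0)
    (chat : ℕ → Fin (n + 1) → ℂ)
    (hpsdk : ∀ k, (toeplitz n (chat k)).PosSemidef)
    (hconv : Tendsto chat atTop (nhds c))
    (δ : MSp → MSp → ℝ)
    (hm₀ : ∀ μ0 μ1 : MSp, δ μ0 μ1 = 0 ↔ μ0 = μ1)
    (hm₁ : ∀ μ0 μ1 : MSp, δ μ0 μ1 = δ μ1 μ0)
    (hm₂ : ∀ μ0 μ1 μ2 : MSp, δ μ0 μ2 ≤ δ μ0 μ1 + δ μ1 μ2)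
    (hcont : Continuous (fun p : MSp × MSp => δ p.1 p.2)) :
    Tendsto (fun k => diamE δ (FsetFin n (chat k))) atTop (nhds 0) :=
  stmt2_general n c hpsd hsing chat hconv δ hm₀ hcont

end
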